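/- LRU caches satisfy the inclusion property: for capacities C₁ ≤ C₂, after processing any common access trace, the set of elements held by an LRU cache of capacity C₁ is a subset of the set held by an LRU cache of capacity C₂. Consequently, the number of misses of LRU is non-increasing in the cache capacity. -/

import Mathlib

/-!
Mattson's stack property: maintain the recency stack of all elements accessed so far, most
recently used first, updated by moving the accessed element to the top. By induction on the
trace, the LRU cache of capacity `C` holds exactly the first `C` entries of this stack. Hence the
smaller cache is a prefix of the larger one at every time, and every hit of the smaller cache is
also a hit of the larger one.
-/

/-- One access of an LRU cache of capacity `C`: the cache is a list with the
most recently used element first.  If `x` is present it is moved to the front;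
otherwise it is inserted and, if the cache now exceeds `C` elements, the least
recently used element is evicted. -/
def lruStep {α : Type} [DecidableEq α] (C : ℕ) (cache : List α) (x : α) : List α :=
  if x ∈ cache then x :: cache.erase x else (x :: cache).take C

/-- The content of an LRU cache of capacity `C` after processing the trace `t`
from the empty initial state. -/
def lruRun {α : Type} [DecidableEq α] (C : ℕ) (t : List α) : List α :=
  t.foldl (lruStep C) []

/-- The number of misses incurred by an LRU cache of capacity `C` with initial
content `cache` on the trace `t`. -/
def lruMisses {α : Type} [DecidableEq α] (C : ℕ) : List α → List α → ℕ
  | _, [] => 0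
  | cache, x :: rest =>
      (if x ∈ cache then 0 else 1) + lruMisses C (lruStep C cache x) rest

namespace List

variable {α : Type} [DecidableEq α]

theorem erase_take_of_mem_take {x : α} :
    ∀ {l : List α} {n : ℕ}, x ∈ l.take n → (l.take n).erase x = (l.erase x).take (n - 1)
  | [], _, h | _ :: _, 0, h => by simp at h
  | y :: l, n + 1, h => by
    by_cases hxy : y = x
    · simp [hxy]
    · have hx : x ∈ l.take n := by simpa [Ne.symm hxy] using h
      rcases n with _ | n
      · simp at hx
      · simp [hxy, erase_take_of_mem_take hx]

theorem take_erase_of_not_mem_take {x : α} :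
    ∀ {l : List α} {n : ℕ}, x ∉ l.take n → (l.erase x).take n = l.take n
  | [], _, _ | _ :: _, 0, _ => by simp
  | y :: l, n + 1, h => by
    have hxy : y ≠ x := by rintro rfl; simp at h
    have hx : x ∉ l.take n := by simp_all
    simp [hxy, take_erase_of_not_mem_take hx]

end List

section LRU

variable {α : Type} [DecidableEq α]

/-- LRU of unbounded capacity, whose state is the recency stack. -/
def recencyStep (s : List α) (x : α) : List α := x :: s.erase x

theorem lruStep_take (C : ℕ) (s : List α) (x : α) :
    lruStep C (s.take C) x = (recencyStep s x).take C := by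
  rcases C with _ | k
  · simp [lruStep]
  unfold lruStep recencyStep
  split_ifs with hx
  · simp [List.erase_take_of_mem_take hx]
  · have hx' : x ∉ s.take k := fun h => hx (List.take_subset_take_left _ k.le_succ h)
    simp [List.take_erase_of_not_mem_take hx', List.take_take]

theorem foldl_lruStep_take (C : ℕ) (t s : List α) :
    t.foldl (lruStep C) (s.take C) = (t.foldl recencyStep s).take C := by
  induction t generalizing s with
  | nil => rfl
  | cons x t ih => simp only [List.foldl_cons, lruStep_take, ih]

theorem lruRun_eq_take (C : ℕ) (t : List α) :
    lruRun C t = (t.foldl recencyStep []).take C := by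
  simpa [lruRun] using foldl_lruStep_take C t []

theorem lruMisses_take_le_of_le {C₁ C₂ : ℕ} (hle : C₁ ≤ C₂) (t s : List α) :
    lruMisses C₂ (s.take C₂) t ≤ lruMisses C₁ (s.take C₁) t := by
  induction t generalizing s with
  | nil => rfl
  | cons x t ih =>
    have hit : x ∈ s.take C₁ → x ∈ s.take C₂ := (List.take_subset_take_left s hle ·)
    simp only [lruMisses, lruStep_take]
    gcongr
    · split_ifs <;> simp_all
    · exact ih _

end LRU

/-- the LRU inclusion property.  For capacities `C₁ ≤ C₂` and any
common access trace processed from the empty state, the set of elements held by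
the capacity-`C₁` LRU cache is a subset of that of the capacity-`C₂` cache;
consequently the number of LRU misses is non-increasing in the capacity. -/
theorem lru_inclusion {α : Type} [DecidableEq α] (C₁ C₂ : ℕ) (hle : C₁ ≤ C₂)
    (t : List α) :
    (∀ x : α, x ∈ lruRun C₁ t → x ∈ lruRun C₂ t) ∧
    lruMisses C₂ [] t ≤ lruMisses C₁ [] t := by
  refine ⟨fun x hx => ?_, by simpa using lruMisses_take_le_of_le hle t []⟩
  rw [lruRun_eq_take] at hx ⊢
  exact List.take_subset_take_left _ hle hx
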